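/- Define q_l = 1/(1+e^{2^{l-η}}) and p_l ∈ [0, 1/2] arbitrary, and carries c_l recursively by c_{l₀} = 0 at the lowest level l₀ and c_{l+1} = p_l(c_l + q_l - 2 q_l c_l) + q_l c_l. Then for every l > η (with l > l₀), c_l < 2^{η - l + 1} - 2/(1 + e^{2^{l-η}}). -/

import Mathlib

/-!
Write `u_l = 2 ^ (l - η)`, so that `u_{l+1} = 2 u_l` and `q_l = σ(-u_l)` with `σ` the logistic
sigmoid. Because `p_l ≤ 1/2`, one step of the recursion at most averages the carry with `q_l`:
`c_{l+1} ≤ (q_l + c_l) / 2`; in particular `0 ≤ c_l < 1/2` at every level.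

The bound `B(u) = 2/u - 2σ(-u)` is then propagated upward from `c_{l₀} = 0 < B(u_{l₀})`.
If `u_l ≤ 1`, then `1 < u_{l+1} ≤ 2` and already `1/2 < B(u_{l+1})`. If `1 < u_l ≤ 2`,
numerical bounds on `e` give `(q_l + 1/2) / 2 < B(2 u_l)`. If `u_l ≥ 2`, then
`4 σ(-2u) ≤ σ(-u)`, and the inductive hypothesis `c_l < B(u_l)` yields `(q_l + c_l) / 2 < 1/u_l - q_l/2 ≤ B(2 u_l)`.
-/

open Real

def carry (p q c : ℝ) : ℝ := p * (c + q - 2 * q * c) + q * c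

lemma carry_nonneg {p q c : ℝ} (hp : 0 ≤ p) (hq0 : 0 ≤ q) (hq : q ≤ 1 / 2) (hc : 0 ≤ c) :
    0 ≤ carry p q c := by
  unfold carry
  have : 0 ≤ c + q - 2 * q * c := by nlinarith
  positivity

lemma carry_le_half_add {p q c : ℝ} (hp : p ≤ 1 / 2) (hq0 : 0 ≤ q) (hq : q ≤ 1 / 2)
    (hc : 0 ≤ c) : carry p q c ≤ (q + c) / 2 := by
  unfold carry
  have : 0 ≤ c + q - 2 * q * c := by nlinarith
  nlinarith

lemma sigmoid_neg_le_half {u : ℝ} (hu : 0 ≤ u) : sigmoid (-u) ≤ 1 / 2 := by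
  simpa [sigmoid_zero] using sigmoid_le (neg_nonpos.mpr hu)

lemma sigmoid_neg_eq_one_div (u : ℝ) : sigmoid (-u) = 1 / (1 + exp u) := by
  rw [sigmoid_def, neg_neg, one_div]

lemma sigmoid_neg_lt_of_lt_exp {u v a : ℝ} (ha : 0 < a) (hvu : v ≤ u) (h : 1 / a - 1 < exp v) :
    sigmoid (-u) < a := by
  have := exp_le_exp.mpr hvu
  rw [sigmoid_neg_eq_one_div, div_lt_iff₀ (by positivity)]
  rw [sub_lt_iff_lt_add, div_lt_iff₀ ha] at h
  nlinarith

-- The bound of the theorem at level `l`, written in terms of `u = 2 ^ (l - η)`.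
noncomputable def carryBound (u : ℝ) : ℝ := 2 / u - 2 * sigmoid (-u)

lemma carryBound_two_mul (u : ℝ) : carryBound (2 * u) = 1 / u - 2 * sigmoid (-(2 * u)) := by
  rw [carryBound, div_mul_cancel_left₀ two_ne_zero, one_div]

lemma carryBound_pos {u : ℝ} (hu : 0 < u) : 0 < carryBound u := by
  have : sigmoid (-u) < 1 / u := sigmoid_neg_lt_of_lt_exp (by positivity) le_rfl (by
    rw [one_div_one_div]; linarith [add_one_le_exp u])
  rw [carryBound, ← mul_one_div]
  linarith

lemma half_lt_carryBound {u : ℝ} (h1 : 1 < u) (h2 : u ≤ 2) : 1 / 2 < carryBound u := by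
  have hexp : (1 + u / 2) ^ 2 ≤ exp u := by
    calc (1 + u / 2) ^ 2 ≤ exp (u / 2) ^ 2 :=
          pow_le_pow_left₀ (by linarith) (by linarith [add_one_le_exp (u / 2)]) 2
      _ = exp u := by rw [← exp_nat_mul]; congr 1; push_cast; ring
  rw [carryBound, sigmoid_neg_eq_one_div, lt_sub_iff_add_lt, mul_one_div,
    div_add_div _ _ two_ne_zero (by positivity), div_lt_div_iff₀ (by positivity) (by linarith)]
  nlinarith [exp_pos u]

lemma exp_two_gt : 7.38 < exp 2 := by
  have h : exp 2 = exp 1 ^ 2 := by rw [exp_one_pow]; norm_num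
  rw [h]
  have h1 : (2.7182818283 : ℝ) ^ 2 < exp 1 ^ 2 := by gcongr; exact exp_one_gt_d9
  linarith

lemma exp_three_gt : 20 < exp 3 := by
  have h : exp 3 = exp 1 ^ 3 := by rw [exp_one_pow]; norm_num
  rw [h]
  have h1 : (2.7182818283 : ℝ) ^ 3 < exp 1 ^ 3 := by gcongr; exact exp_one_gt_d9
  linarith

lemma half_add_half_lt_carryBound_two_mul {u : ℝ} (h1 : 1 < u) (h2 : u ≤ 2) :
    (sigmoid (-u) + 1 / 2) / 2 < carryBound (2 * u) := by
  rw [carryBound_two_mul]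
  rcases le_or_gt u (3 / 2) with hu | hu
  · have hσ : sigmoid (-u) < 0.269 :=
      sigmoid_neg_lt_of_lt_exp (by norm_num) h1.le (by norm_num; linarith [exp_one_gt_d9])
    have hσ2 : sigmoid (-(2 * u)) < 0.1195 :=
      sigmoid_neg_lt_of_lt_exp (v := 2) (by norm_num) (by linarith)
        (by norm_num; linarith [exp_two_gt])
    have : (2 : ℝ) / 3 ≤ 1 / u := by rw [le_div_iff₀ (by linarith)]; linarith
    linarith
  · have hσ : sigmoid (-u) < 0.25 :=
      sigmoid_neg_lt_of_lt_exp (v := 3 / 2) (by norm_num) hu.le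
        (by norm_num; linarith [quadratic_le_exp_of_nonneg (by norm_num : (0 : ℝ) ≤ 3 / 2)])
    have hσ2 : sigmoid (-(2 * u)) < 0.048 :=
      sigmoid_neg_lt_of_lt_exp (v := 3) (by norm_num) (by linarith)
        (by norm_num; linarith [exp_three_gt])
    have : (1 : ℝ) / 2 ≤ 1 / u := by rw [le_div_iff₀ (by linarith)]; linarith
    linarith

lemma four_mul_sigmoid_neg_two_mul_le {u : ℝ} (hu : 2 ≤ u) :
    4 * sigmoid (-(2 * u)) ≤ sigmoid (-u) := by
  have h2 : exp 2 ≤ exp u := exp_le_exp.mpr hu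
  have hsq : exp (2 * u) = exp u ^ 2 := by rw [← exp_nat_mul]; norm_num
  rw [sigmoid_neg_eq_one_div, sigmoid_neg_eq_one_div, mul_one_div,
    div_le_div_iff₀ (by positivity) (by positivity), hsq]
  nlinarith [exp_two_gt]

lemma half_add_lt_carryBound_two_mul {u c : ℝ} (hu : 2 ≤ u) (hc : c < carryBound u) :
    (sigmoid (-u) + c) / 2 < carryBound (2 * u) := by
  have := four_mul_sigmoid_neg_two_mul_le hu
  have h : 2 / u / 2 = 1 / u := by field_simp
  rw [carryBound] at hc
  rw [carryBound_two_mul]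
  linarith

section CarrySequence

variable {l₀ : ℤ} {u p q c : ℤ → ℝ}
  (hq : ∀ l, q l = sigmoid (-u l)) (hp0 : ∀ l, 0 ≤ p l) (hp : ∀ l, p l ≤ 1 / 2)
  (hc0 : c l₀ = 0) (hrec : ∀ l, l₀ ≤ l → c (l + 1) = carry (p l) (q l) (c l))
include hq hp0 hp hc0 hrec

lemma carry_seq_mem_Ico (hu : ∀ l, 0 ≤ u l) :
    ∀ l, l₀ ≤ l → c l ∈ Set.Ico 0 (1 / 2) := by
  refine Int.leInduction (by simp [hc0]) fun n hn ⟨h0, h1⟩ => ?_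
  have hq0 : 0 ≤ q n := hq n ▸ sigmoid_nonneg _
  have hq1 : q n ≤ 1 / 2 := hq n ▸ sigmoid_neg_le_half (hu n)
  rw [hrec n hn]
  exact ⟨carry_nonneg (hp0 n) hq0 hq1 h0,
    (carry_le_half_add (hp n) hq0 hq1 h0).trans_lt (by linarith)⟩

lemma carry_seq_lt_carryBound (hu : ∀ l, 0 < u l) (hu2 : ∀ l, u (l + 1) = 2 * u l) :
    ∀ l, l₀ ≤ l → 1 < u l → c l < carryBound (u l) := by
  have hmem := carry_seq_mem_Ico hq hp0 hp hc0 hrec fun l => (hu l).le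
  refine Int.leInduction (fun _ => hc0 ▸ carryBound_pos (hu l₀)) fun n hn ih hn1 => ?_
  obtain ⟨h0, h1⟩ := hmem n hn
  have hstep : c (n + 1) ≤ (sigmoid (-u n) + c n) / 2 := by
    rw [hrec n hn, ← hq]
    exact carry_le_half_add (hp n) (hq n ▸ sigmoid_nonneg _)
      (hq n ▸ sigmoid_neg_le_half (hu n).le) h0
  rw [hu2] at hn1 ⊢
  rcases le_or_gt (u n) 1 with hle1 | hgt1
  · exact (hmem (n + 1) (by omega)).2.trans (half_lt_carryBound hn1 (by linarith))
  rcases le_or_gt (u n) 2 with hle2 | hgt2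
  · exact hstep.trans_lt (lt_of_le_of_lt (by linarith)
      (half_add_half_lt_carryBound_two_mul hgt1 hle2))
  · exact hstep.trans_lt (half_add_lt_carryBound_two_mul hgt2.le (ih hgt1))

end CarrySequence

theorem stmt_8 (η : ℝ) (l₀ : ℤ) (p q c : ℤ → ℝ)
    (hq : ∀ l, q l = 1 / (1 + Real.exp ((2 : ℝ) ^ ((l : ℝ) - η))))
    (hp0 : ∀ l, 0 ≤ p l) (hp : ∀ l, p l ≤ 1 / 2)
    (hc0 : c l₀ = 0)
    (hrec : ∀ l : ℤ, l₀ ≤ l →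
      c (l + 1) = p l * (c l + q l - 2 * q l * c l) + q l * c l) :
    ∀ l : ℤ, l₀ < l → (l : ℝ) > η →
      c l < (2 : ℝ) ^ (η - (l : ℝ) + 1) - 2 / (1 + Real.exp ((2 : ℝ) ^ ((l : ℝ) - η))) := by
  intro l hl hlη
  have hu (l : ℤ) : 0 < (2 : ℝ) ^ ((l : ℝ) - η) := rpow_pos_of_pos two_pos _
  have hu2 (l : ℤ) : (2 : ℝ) ^ (((l + 1 : ℤ) : ℝ) - η) = 2 * 2 ^ ((l : ℝ) - η) := by
    rw [Int.cast_add, Int.cast_one, add_sub_right_comm, rpow_add_one two_ne_zero, mul_comm]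
  have hbound := carry_seq_lt_carryBound (fun l => (hq l).trans (sigmoid_neg_eq_one_div _).symm)
    hp0 hp hc0 hrec hu hu2 l hl.le (one_lt_rpow one_lt_two (by linarith))
  rw [show η - (l : ℝ) + 1 = 1 - ((l : ℝ) - η) by ring, rpow_sub two_pos, rpow_one,
    ← mul_one_div 2 (1 + _), ← sigmoid_neg_eq_one_div]
  exact hbound
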